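/- arXiv:0706.1234 — 2 statements merged into one kernel-verified Lean document; each statement's English description precedes it below -/
import Mathlib

section
/- For every T ∈ M_r(ℂ) and λ ∈ (0,1), the Frobenius norm satisfies ‖Δ_λ(T)‖₂ ≤ ‖T‖₂. -/
open Matrix
open scoped ComplexOrder

/-- `|T| = (Tᴴ T)^{1/2}`, the positive semidefinite absolute value of a matrix. -/
noncomputable def matAbs {n : Type*} [Fintype n] [DecidableEq n]
    (T : Matrix n n ℂ) : Matrix n n ℂ :=
  ((Matrix.posSemidef_conjTranspose_mul_self T).1.eigenvectorUnitary : Matrix n n ℂ) *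
    diagonal (((↑) : ℝ → ℂ) ∘ (√·) ∘ (Matrix.posSemidef_conjTranspose_mul_self T).1.eigenvalues) *
    (star (Matrix.posSemidef_conjTranspose_mul_self T).1.eigenvectorUnitary : Matrix n n ℂ)

/-- Real power `P^l` of a Hermitian matrix, via the functional calculus
(junk value `0` if `P` is not Hermitian). -/
noncomputable def hermPow {n : Type*} [Fintype n] [DecidableEq n]
    (P : Matrix n n ℂ) (l : ℝ) : Matrix n n ℂ :=
  if h : P.IsHermitian then h.cfc (fun x : ℝ => x ^ l) else 0

/-- The λ-Aluthge transform `|T|^λ U |T|^{1-λ}`, where `U` is a polar part of `T`. -/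
noncomputable def aluthge {n : Type*} [Fintype n] [DecidableEq n]
    (l : ℝ) (U T : Matrix n n ℂ) : Matrix n n ℂ :=
  hermPow (matAbs T) l * U * hermPow (matAbs T) (1 - l)

/-- The Frobenius norm of a matrix. -/
noncomputable def frobNorm {n : Type*} [Fintype n] (A : Matrix n n ℂ) : ℝ :=
  Real.sqrt (∑ i, ∑ j, ‖A i j‖ ^ 2)

/-! Diagonalize `|T| = V D V*` with `D = diag μ`, `μ ≥ 0`. Then `Δ_λ(T)` is unitarily equivalent to
`D^λ W D^{1-λ}` with `W = V* U V` unitary, whose `(i, j)` entry has squared modulus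
`|w_ij|² μ_i^{2λ} μ_j^{2(1-λ)} ≤ |w_ij|² (λ μ_i² + (1-λ) μ_j²)` by weighted AM-GM.
As `(|w_ij|²)` is doubly stochastic, summing gives at most `∑ μ_i² = ‖|T|‖₂² = ‖T‖₂²`. -/

section

variable {n : Type*} [Fintype n]

lemma sum_sum_norm_sq_eq_trace (A : Matrix n n ℂ) :
    ((∑ i, ∑ j, ‖A i j‖ ^ 2 : ℝ) : ℂ) = (Aᴴ * A).trace := by
  simp only [Matrix.trace, Matrix.diag, Matrix.mul_apply, Matrix.conjTranspose_apply]
  rw [Finset.sum_comm]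
  push_cast
  refine Finset.sum_congr rfl fun i _ => Finset.sum_congr rfl fun j _ => ?_
  rw [RCLike.star_def, RCLike.conj_mul]
  norm_cast

lemma frobNorm_eq_sqrt_re_trace (A : Matrix n n ℂ) :
    frobNorm A = √(Aᴴ * A).trace.re := by
  rw [frobNorm, ← sum_sum_norm_sq_eq_trace, Complex.ofReal_re]

variable [DecidableEq n]

lemma frobNorm_unitary_mul {U : Matrix n n ℂ} (hU : U ∈ unitaryGroup n ℂ) (A : Matrix n n ℂ) :
    frobNorm (U * A) = frobNorm A := by
  rw [frobNorm_eq_sqrt_re_trace, frobNorm_eq_sqrt_re_trace, conjTranspose_mul, Matrix.mul_assoc,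
    ← Matrix.mul_assoc Uᴴ, ← star_eq_conjTranspose U, mem_unitaryGroup_iff'.mp hU, Matrix.one_mul]

lemma frobNorm_mul_unitary {U : Matrix n n ℂ} (hU : U ∈ unitaryGroup n ℂ) (A : Matrix n n ℂ) :
    frobNorm (A * U) = frobNorm A := by
  rw [frobNorm_eq_sqrt_re_trace, frobNorm_eq_sqrt_re_trace, conjTranspose_mul, ← Matrix.mul_assoc,
    trace_mul_comm, ← Matrix.mul_assoc, ← Matrix.mul_assoc, ← star_eq_conjTranspose U,
    mem_unitaryGroup_iff.mp hU, Matrix.one_mul]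

lemma frobNorm_conjStarAlgAut (u : unitary (Matrix n n ℂ)) (A : Matrix n n ℂ) :
    frobNorm (Unitary.conjStarAlgAut ℂ _ u A) = frobNorm A := by
  rw [Unitary.conjStarAlgAut_apply, frobNorm_mul_unitary (Unitary.star_mem u.2),
    frobNorm_unitary_mul u.2]

lemma sum_norm_sq_row_eq_one {U : Matrix n n ℂ} (hU : U ∈ unitaryGroup n ℂ)
    (i : n) : ∑ j, ‖U i j‖ ^ 2 = 1 := by
  have h := congrFun (congrFun (mem_unitaryGroup_iff.mp hU) i) i
  rw [Matrix.mul_apply, Matrix.one_apply_eq] at h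
  apply Complex.ofReal_injective
  push_cast
  rw [← h]
  refine Finset.sum_congr rfl fun j _ => ?_
  rw [star_apply, RCLike.star_def, RCLike.mul_conj]
  norm_cast

lemma sum_norm_sq_col_eq_one {U : Matrix n n ℂ} (hU : U ∈ unitaryGroup n ℂ)
    (j : n) : ∑ i, ‖U i j‖ ^ 2 = 1 := by
  simpa using sum_norm_sq_row_eq_one (Unitary.star_mem hU) j

lemma sum_sum_norm_sq_mul_add {U : Matrix n n ℂ} (hU : U ∈ unitaryGroup n ℂ)
    (f g : n → ℝ) : ∑ i, ∑ j, ‖U i j‖ ^ 2 * (f i + g j) = ∑ i, f i + ∑ j, g j := by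
  simp only [mul_add, Finset.sum_add_distrib]
  rw [Finset.sum_comm (f := fun i j => ‖U i j‖ ^ 2 * g j)]
  simp only [← Finset.sum_mul, sum_norm_sq_row_eq_one hU, sum_norm_sq_col_eq_one hU, one_mul]

lemma Real.sq_rpow_mul_rpow_one_sub_le {x y l : ℝ} (hx : 0 ≤ x) (hy : 0 ≤ y) (hl₀ : 0 ≤ l)
    (hl₁ : l ≤ 1) : (x ^ l * y ^ (1 - l)) ^ 2 ≤ l * x ^ 2 + (1 - l) * y ^ 2 := by
  rw [mul_pow, Real.rpow_pow_comm hx, Real.rpow_pow_comm hy]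
  exact Real.geom_mean_le_arith_mean2_weighted hl₀ (sub_nonneg.mpr hl₁) (sq_nonneg x)
    (sq_nonneg y) (add_sub_cancel l 1)

lemma frobNorm_diagonal_ofReal (μ : n → ℝ) :
    frobNorm (diagonal (((↑) : ℝ → ℂ) ∘ μ)) = √(∑ i, μ i ^ 2) := by
  rw [frobNorm]
  congr 1
  refine Finset.sum_congr rfl fun i _ => ?_
  rw [Finset.sum_eq_single i (fun j _ hji => by simp [diagonal_apply_ne _ (Ne.symm hji)])
    (by simp)]
  simp

lemma frobNorm_diagonal_rpow_mul_mul_diagonal_rpow_le {μ : n → ℝ} (hμ : ∀ i, 0 ≤ μ i)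
    {W : Matrix n n ℂ} (hW : W ∈ unitaryGroup n ℂ) {l : ℝ} (hl₀ : 0 ≤ l) (hl₁ : l ≤ 1) :
    frobNorm (diagonal (((↑) : ℝ → ℂ) ∘ (· ^ l) ∘ μ) * W *
      diagonal (((↑) : ℝ → ℂ) ∘ (· ^ (1 - l)) ∘ μ)) ≤ frobNorm (diagonal (((↑) : ℝ → ℂ) ∘ μ)) := by
  rw [frobNorm_diagonal_ofReal, frobNorm]
  refine Real.sqrt_le_sqrt ?_
  have hentry : ∀ i j, ‖(diagonal (((↑) : ℝ → ℂ) ∘ (· ^ l) ∘ μ) * W *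
      diagonal (((↑) : ℝ → ℂ) ∘ (· ^ (1 - l)) ∘ μ)) i j‖ ^ 2
      ≤ ‖W i j‖ ^ 2 * (l * μ i ^ 2 + (1 - l) * μ j ^ 2) := by
    intro i j
    rw [mul_diagonal, diagonal_mul]
    simp only [Function.comp_apply, norm_mul, Complex.norm_real, Real.norm_eq_abs,
      abs_of_nonneg (Real.rpow_nonneg (hμ _) _)]
    calc _ = ‖W i j‖ ^ 2 * (μ i ^ l * μ j ^ (1 - l)) ^ 2 := by ring
      _ ≤ _ := mul_le_mul_of_nonneg_left
        (Real.sq_rpow_mul_rpow_one_sub_le (hμ i) (hμ j) hl₀ hl₁) (sq_nonneg _)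
  calc _ ≤ ∑ i, ∑ j, ‖W i j‖ ^ 2 * (l * μ i ^ 2 + (1 - l) * μ j ^ 2) :=
        Finset.sum_le_sum fun i _ => Finset.sum_le_sum fun j _ => hentry i j
    _ = ∑ i, μ i ^ 2 := by
        rw [sum_sum_norm_sq_mul_add hW, ← Finset.mul_sum, ← Finset.mul_sum]
        ring

lemma Matrix.IsHermitian.hermPow_eq {P : Matrix n n ℂ} (hP : P.IsHermitian) (s : ℝ) :
    hermPow P s = Unitary.conjStarAlgAut ℂ _ hP.eigenvectorUnitary
      (diagonal (((↑) : ℝ → ℂ) ∘ (· ^ s) ∘ hP.eigenvalues)) := by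
  rw [hermPow, dif_pos hP]
  rfl

lemma Matrix.PosSemidef.frobNorm_hermPow_mul_mul_hermPow_le {P : Matrix n n ℂ}
    (hP : P.PosSemidef) {U : Matrix n n ℂ} (hU : U ∈ unitaryGroup n ℂ) {l : ℝ} (hl₀ : 0 ≤ l)
    (hl₁ : l ≤ 1) : frobNorm (hermPow P l * U * hermPow P (1 - l)) ≤ frobNorm P := by
  set conj := Unitary.conjStarAlgAut ℂ _ hP.1.eigenvectorUnitary
  have hW : conj.symm U ∈ unitaryGroup n ℂ := by
    rw [Unitary.conjStarAlgAut_symm_apply]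
    exact mul_mem (mul_mem (Unitary.star_mem (SetLike.coe_mem _)) hU) (SetLike.coe_mem _)
  have hconj : hermPow P l * U * hermPow P (1 - l) = conj
      (diagonal (((↑) : ℝ → ℂ) ∘ (· ^ l) ∘ hP.1.eigenvalues) * conj.symm U *
        diagonal (((↑) : ℝ → ℂ) ∘ (· ^ (1 - l)) ∘ hP.1.eigenvalues)) := by
    rw [map_mul, map_mul, StarAlgEquiv.apply_symm_apply, hP.1.hermPow_eq, hP.1.hermPow_eq]
  conv_rhs => rw [hP.1.spectral_theorem]
  rw [hconj, frobNorm_conjStarAlgAut, frobNorm_conjStarAlgAut]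
  exact frobNorm_diagonal_rpow_mul_mul_diagonal_rpow_le hP.eigenvalues_nonneg hW hl₀ hl₁

lemma matAbs_posSemidef (T : Matrix n n ℂ) : (matAbs T).PosSemidef :=
  (PosSemidef.diagonal fun _ => Complex.zero_le_real.mpr (Real.sqrt_nonneg _)).mul_mul_conjTranspose_same
    _

end

/-- `‖Δ_λ(T)‖₂ ≤ ‖T‖₂` for the Frobenius norm. -/
theorem frobNorm_aluthge_le {r : ℕ} (l : ℝ) (hl : l ∈ Set.Ioo (0 : ℝ) 1)
    (T U : Matrix (Fin r) (Fin r) ℂ)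
    (hU : U ∈ Matrix.unitaryGroup (Fin r) ℂ) (hpolar : T = U * matAbs T) :
    frobNorm (aluthge l U T) ≤ frobNorm T := by
  calc frobNorm (aluthge l U T) ≤ frobNorm (matAbs T) :=
        (matAbs_posSemidef T).frobNorm_hermPow_mul_mul_hermPow_le hU hl.1.le hl.2.le
    _ = frobNorm T := by
        conv_rhs => rw [hpolar]
        rw [frobNorm_unitary_mul hU]
end

section
/- Daletskii–Krein formula: let γ : I → M_r(ℂ) be a C¹ curve of Hermitian matrices with spectra contained in an open interval J, let f : J → ℝ be C¹, and suppose γ(t₀) = diag(a₁,…,a_r). Then (f ∘ γ)'(t₀) = M_f ∘ γ'(t₀), where (M_f)_{ij} = (f(a_j)−f(a_i))/(a_j−a_i) if a_i ≠ a_j and (M_f)_{ii'} = f'(a_i) if a_i = a_{i'}, and ∘ denotes the Hadamard product. -/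
/-!
Let `d` be the diagonal of `γ t₀` and `gᵢ = dslope f (d i)` the divided difference of `f` at
`d i`. Since `(y - d i) * gᵢ y = f y - f (d i)`, the functional calculus gives
`f B - f (d i) • 1 = (B - d i • 1) * gᵢ B` for every Hermitian `B`. Row `i` of `diag d` is `d i`
times row `i` of `1`, so row `i` of `f (γ t) - f (γ t₀)` equals row `i` of
`(γ t - γ t₀) * gᵢ (γ t)`. Dividing by `t - t₀` and letting `t → t₀`, continuity of the
functional calculus (`gᵢ` is continuous because `f` is differentiable) turns this into row `i` of
`γ' t₀ * gᵢ (diag d)`, whose entries are `γ' t₀ i j * gᵢ (d j)`.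
-/

open Matrix

/-- `f` applied to a Hermitian matrix via the functional calculus
(junk value `0` if the matrix is not Hermitian). -/
noncomputable def cfcApply {n : Type*} [Fintype n] [DecidableEq n]
    (f : ℝ → ℝ) (A : Matrix n n ℂ) : Matrix n n ℂ :=
  if h : A.IsHermitian then h.cfc f else 0

open Filter Topology

theorem dslope_eq_ite_of_hasDerivAt {𝕜 : Type*} [NontriviallyNormedField 𝕜] [DecidableEq 𝕜]
    {f f' : 𝕜 → 𝕜} {a b : 𝕜} (hf : HasDerivAt f (f' a) a) :
    dslope f a b = if a = b then f' a else (f b - f a) / (b - a) := by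
  split_ifs with hab
  · rw [← hab, dslope_same, hf.deriv]
  · rw [dslope_of_ne f (Ne.symm hab), slope_def_field]

variable {n : Type*} [Fintype n] [DecidableEq n]

theorem cfcApply_eq_cfc (f : ℝ → ℝ) (A : Matrix n n ℂ) : cfcApply f A = cfc f A := by
  by_cases hA : A.IsHermitian
  · rw [cfcApply, dif_pos hA, hA.cfc_eq]
  · rw [cfcApply, dif_neg hA]
    exact (cfc_apply_of_not_predicate A hA).symm

/- Continuity of the functional calculus is proved for C⋆-algebras; the C⋆-norm on matrices is the
`L²` operator norm, whose topology is by construction the default one on `Matrix n n ℂ`. -/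
open scoped Matrix.Norms.L2Operator in
theorem ContinuousOn.matrix_cfc {X : Type*} [TopologicalSpace X] {γ : X → Matrix n n ℂ}
    {s : Set X} {U : Set ℝ} {g : ℝ → ℝ} (hγ : ContinuousOn γ s) (hU : IsOpen U)
    (hg : ContinuousOn g U) (hherm : ∀ x ∈ s, (γ x).IsHermitian)
    (hspec : ∀ x ∈ s, spectrum ℝ (γ x) ⊆ U) :
    ContinuousOn (fun x => cfc g (γ x)) s :=
  hγ.cfc_of_mem_nhdsSet g (hU.mem_nhdsSet.2 (Set.iUnion₂_subset hspec)) hherm hg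

namespace Matrix

theorem IsHermitian.cfc_sub_algebraMap_eq_mul_cfc_dslope {B : Matrix n n ℂ}
    (hB : B.IsHermitian) (f : ℝ → ℝ) (a : ℝ) :
    cfc f B - algebraMap ℝ _ (f a) = (B - algebraMap ℝ _ a) * cfc (dslope f a) B := by
  have hcont (g : ℝ → ℝ) : ContinuousOn g (spectrum ℝ B) :=
    B.finite_real_spectrum.continuousOn g
  have hf : cfc f B = cfc (fun y => (y - a) * dslope f a y + f a) B := by
    congr 1
    funext y
    rw [← smul_eq_mul, sub_smul_dslope, sub_add_cancel]
  rw [hf, cfc_add_const (f a) (fun y => (y - a) * dslope f a y) B (hcont _) hB.isSelfAdjoint,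
    cfc_mul (fun y => y - a) (dslope f a) B (hcont _) (hcont _),
    cfc_sub (fun y => y) (fun _ => a) B (hcont _) (hcont _), cfc_id' ℝ B hB.isSelfAdjoint,
    cfc_const a B hB.isSelfAdjoint, add_sub_cancel_right]

theorem IsHermitian.cfc_apply_sub_diagonal_apply {B : Matrix n n ℂ} (hB : B.IsHermitian)
    (f : ℝ → ℝ) (d : n → ℝ) (i j : n) :
    cfc f B i j - diagonal (fun k => (f (d k) : ℂ)) i j =
      ((B - diagonal (fun k => (d k : ℂ))) * cfc (dslope f (d i)) B) i j := by
  have key := congrFun (congrFun (hB.cfc_sub_algebraMap_eq_mul_cfc_dslope f (d i)) i) j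
  have hdiag : algebraMap ℝ (Matrix n n ℂ) (f (d i)) i j =
      diagonal (fun k => (f (d k) : ℂ)) i j := by
    rcases eq_or_ne i j with rfl | hij
    · simp [algebraMap_eq_diagonal]
    · simp [algebraMap_eq_diagonal, hij]
  rw [Matrix.sub_apply, hdiag] at key
  rw [key, Matrix.sub_mul, Matrix.sub_mul, Matrix.sub_apply, Matrix.sub_apply, diagonal_mul,
    algebraMap_eq_diagonal, diagonal_mul]
  rfl

theorem cfc_diagonal_ofReal (f : ℝ → ℝ) (d : n → ℝ) :
    cfc f (diagonal (fun i => (d i : ℂ))) = diagonal (fun i => (f (d i) : ℂ)) := by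
  have hD : (diagonal (fun i => (d i : ℂ))).IsHermitian :=
    isHermitian_diagonal_iff.2 fun i => Complex.conj_ofReal (d i)
  ext i j
  have h := hD.cfc_apply_sub_diagonal_apply f d i j
  rwa [sub_self, Matrix.zero_mul, Matrix.zero_apply, sub_eq_zero] at h

section Frobenius

attribute [local instance] Matrix.frobeniusNormedAddCommGroup Matrix.frobeniusNormedSpace
  Matrix.frobeniusNormedRing

theorem hasDerivAt_iff_tendsto_slope_apply {ι κ : Type*} [Fintype ι] [Fintype κ]
    {F : ℝ → Matrix ι κ ℂ} {F' : Matrix ι κ ℂ} {t₀ : ℝ} :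
    HasDerivAt F F' t₀ ↔ ∀ i j, Tendsto (fun t => slope F t₀ t i j) (𝓝[≠] t₀) (𝓝 (F' i j)) :=
  hasDerivAt_iff_tendsto_slope.trans <|
    tendsto_pi_nhds.trans (forall_congr' fun _ => tendsto_pi_nhds)

theorem hasDerivAt_cfc_of_eq_diagonal {γ : ℝ → Matrix n n ℂ} {D : Matrix n n ℂ} {t₀ : ℝ}
    {d : n → ℝ} (f : ℝ → ℝ) (hγ : HasDerivAt γ D t₀)
    (hγ₀ : γ t₀ = diagonal (fun i => (d i : ℂ))) (hherm : ∀ᶠ t in 𝓝 t₀, (γ t).IsHermitian)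
    (hcont : ∀ i, ContinuousAt (fun t => cfc (dslope f (d i)) (γ t)) t₀) :
    HasDerivAt (fun t => cfc f (γ t))
      (of fun i j => ((dslope f (d i) (d j) : ℝ) : ℂ) * D i j) t₀ := by
  refine hasDerivAt_iff_tendsto_slope_apply.2 fun i j => ?_
  have hslope : ∀ᶠ t in 𝓝[≠] t₀, (slope γ t₀ t * cfc (dslope f (d i)) (γ t)) i j =
      slope (fun t => cfc f (γ t)) t₀ t i j := by
    filter_upwards [nhdsWithin_le_nhds hherm] with t ht
    rw [slope_def_module, slope_def_module, Matrix.smul_apply, Matrix.smul_mul, Matrix.smul_apply,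
      hγ₀, cfc_diagonal_ofReal, Matrix.sub_apply, ht.cfc_apply_sub_diagonal_apply f d i j]
  have hcfc : Tendsto (fun t => cfc (dslope f (d i)) (γ t)) (𝓝[≠] t₀)
      (𝓝 (diagonal fun k => ((dslope f (d i) (d k) : ℝ) : ℂ))) := by
    have h := (hcont i).tendsto
    rw [hγ₀, cfc_diagonal_ofReal] at h
    exact h.mono_left nhdsWithin_le_nhds
  have hlim := (hasDerivAt_iff_tendsto_slope.1 hγ).mul hcfc
  have hval : (D * diagonal fun k => ((dslope f (d i) (d k) : ℝ) : ℂ)) i j =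
      (of fun i j => ((dslope f (d i) (d j) : ℝ) : ℂ) * D i j) i j := by
    rw [mul_diagonal, of_apply, mul_comm]
  exact (hval ▸ ((continuous_apply_apply i j).tendsto _).comp hlim).congr' hslope

end Frobenius

end Matrix

/-- Daletskii–Krein: if `γ` is a `C¹` curve of Hermitian matrices on the
open interval `(a,b)` with spectra in the open interval `(c,e)`, `f : (c,e) → ℝ` is `C¹`
with derivative `f'`, and `γ t₀ = diag(a₁,…,a_r)`, then
`(f ∘ γ)'(t₀) = M_f ∘ γ'(t₀)` (Hadamard product), where `(M_f)_{ij}` is the divided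
difference of `f` at `aᵢ, aⱼ`. -/
theorem daletskii_krein {r : ℕ} (a b c e t₀ : ℝ) (f f' : ℝ → ℝ)
    (γ : ℝ → Matrix (Fin r) (Fin r) ℂ) (Dm : Matrix (Fin r) (Fin r) ℂ)
    (av : Fin r → ℝ) :
    letI : NormedAddCommGroup (Matrix (Fin r) (Fin r) ℂ) :=
      Matrix.frobeniusNormedAddCommGroup
    letI : NormedSpace ℝ (Matrix (Fin r) (Fin r) ℂ) := Matrix.frobeniusNormedSpace
    ∀ (_ : t₀ ∈ Set.Ioo a b)
      (hherm : ∀ t ∈ Set.Ioo a b, (γ t).IsHermitian)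
      (_ : ∀ t, ∀ (ht : t ∈ Set.Ioo a b), ∀ i, (hherm t ht).eigenvalues i ∈ Set.Ioo c e)
      (_ : ∀ x ∈ Set.Ioo c e, HasDerivAt f (f' x) x)
      (_ : ContDiffOn ℝ 1 γ (Set.Ioo a b))
      (_ : HasDerivAt γ Dm t₀)
      (_ : γ t₀ = Matrix.diagonal (fun i => (av i : ℂ))),
    HasDerivAt (fun t => cfcApply f (γ t))
      (Matrix.of fun i j =>
        (if av i = av j then (f' (av i) : ℂ)
          else ((f (av j) : ℂ) - (f (av i) : ℂ)) / ((av j : ℂ) - (av i : ℂ))) * Dm i j)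
      t₀ := by
  let _ : NormedAddCommGroup (Matrix (Fin r) (Fin r) ℂ) := Matrix.frobeniusNormedAddCommGroup
  let _ : NormedSpace ℝ (Matrix (Fin r) (Fin r) ℂ) := Matrix.frobeniusNormedSpace
  intro ht₀ hherm hspec hf hγ hDγ hγ₀
  have hspecIoo : ∀ t ∈ Set.Ioo a b, spectrum ℝ (γ t) ⊆ Set.Ioo c e := by
    intro t ht
    rw [(hherm t ht).spectrum_real_eq_range_eigenvalues]
    rintro _ ⟨k, rfl⟩
    exact hspec t ht k
  have hav (i : Fin r) : av i ∈ Set.Ioo c e := by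
    refine hspecIoo t₀ ht₀ ?_
    rw [hγ₀, ← spectrum.algebraMap_mem_iff ℂ, spectrum_diagonal]
    exact ⟨i, rfl⟩
  have hcont (i : Fin r) : ContinuousAt (fun t => cfc (dslope f (av i)) (γ t)) t₀ := by
    have hg : ContinuousOn (dslope f (av i)) (Set.Ioo c e) :=
      (continuousOn_dslope (Ioo_mem_nhds (hav i).1 (hav i).2)).2
        ⟨fun x hx => (hf x hx).continuousAt.continuousWithinAt, (hf _ (hav i)).differentiableAt⟩
    exact (hγ.continuousOn.matrix_cfc isOpen_Ioo hg hherm hspecIoo).continuousAt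
      (Ioo_mem_nhds ht₀.1 ht₀.2)
  have hDK := hasDerivAt_cfc_of_eq_diagonal f hDγ hγ₀
    (eventually_of_mem (Ioo_mem_nhds ht₀.1 ht₀.2) hherm) hcont
  simp only [cfcApply_eq_cfc]
  convert hDK using 5 with i j
  rw [dslope_eq_ite_of_hasDerivAt (hf _ (hav i))]
  split_ifs <;> push_cast <;> rfl
end
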